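/- arXiv:math/9808070 — 2 statements merged into one kernel-verified Lean document; each statement's English description precedes it below -/
import Mathlib

section
/- Let a, c be positive reals and b, d ∈ ℂ with a² − |b|² = 1, c² − |d|² = 1, and m := Im(conj(b)·d) > 1. Let H = M_Y⁻¹·M_X⁻¹·M_Y·M_X with M_X = [[a, b], [conj(b), a]], M_Y = [[c, d], [conj(d), c]], M_X⁻¹ = [[a, −b], [−conj(b), a]], M_Y⁻¹ = [[c, −d], [−conj(d), c]], let h(z) = (H₁₁ z + H₁₂)/(H₂₁ z + H₂₂), and let z_± = −(ad + bc)·(ac + Re(conj(b)·d) ± i·√(m² − 1)) / |ad + bc|² be its fixed points on the unit circle. Then the complex derivative satisfies h'(z_±) = (2m·(m ± √(m² − 1)) − 1)^{−2}, and 0 < h'(z₊) < 1 < h'(z₋); thus z₊ is an attracting fixed point and z₋ is a repelling fixed point of h on the unit circle. -/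
/-!
With `X = su11 a b` and `Y = su11 c d`, where `su11 p q = [[p, q], [conj q, conj p]]`, one has
`YX = su11 u E` and `Y⁻¹X⁻¹ = (XY)⁻¹ = su11 u (-E)` for `u = ac + conj b d`, `E = ad + bc`.
Hence `H = su11 u (-E) * su11 u E` has determinant one, so `h' = (H₂₁ z + H₂₂)⁻²`, and at
`z = -E w / |E|²` the denominator collapses to `(conj u - u)(conj u - w) + 1` because
`|u|² - |E|² = 1`. For `w = Re u ± i√(m² - 1)` and `Im u = m` this is
`1 - 2m(m ± √(m² - 1))`; the two numbers `2m(m ± √(m² - 1)) - 1` are reciprocal and the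
larger one exceeds `1`.
-/

open Complex ComplexConjugate

def su11 (p q : ℂ) : Matrix (Fin 2) (Fin 2) ℂ := !![p, q; conj q, conj p]

lemma su11_apply_one_zero (p q : ℂ) : su11 p q 1 0 = conj q := rfl
lemma su11_apply_one_one (p q : ℂ) : su11 p q 1 1 = conj p := rfl

lemma su11_mul (p q r t : ℂ) :
    su11 p q * su11 r t = su11 (p * r + q * conj t) (p * t + q * conj r) := by
  ext i j
  fin_cases i <;> fin_cases j <;> simp [su11, Matrix.mul_apply] <;> ring

lemma det_su11 (p q : ℂ) : (su11 p q).det = (normSq p - normSq q : ℝ) := by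
  simp [su11, Matrix.det_fin_two, ← mul_conj]

lemma su11_ofReal (a : ℝ) (b : ℂ) : !![(a : ℂ), b; conj b, (a : ℂ)] = su11 a b := by
  rw [su11, conj_ofReal]

lemma su11_mul_su11_ofReal (a c : ℝ) (b d : ℂ) :
    su11 c d * su11 a b = su11 (a * c + conj b * d) (a * d + b * c) := by
  rw [su11_mul, conj_ofReal]; congr 1 <;> ring

lemma su11_commutator_ofReal (a c : ℝ) (b d : ℂ) :
    su11 c (-d) * su11 a (-b) * su11 c d * su11 a b
      = su11 (a * c + conj b * d) (-(a * d + b * c)) *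
          su11 (a * c + conj b * d) (a * d + b * c) := by
  rw [mul_assoc, su11_mul_su11_ofReal, su11_mul_su11_ofReal, map_neg]
  congr 2 <;> ring

lemma normSq_sub_normSq_eq_one {a c : ℝ} {b d : ℂ}
    (hab : a ^ 2 - ‖b‖ ^ 2 = 1) (hcd : c ^ 2 - ‖d‖ ^ 2 = 1) :
    normSq (a * c + conj b * d) - normSq (a * d + b * c) = 1 := by
  have hdet : ((normSq (a * c + conj b * d) - normSq (a * d + b * c) : ℝ) : ℂ) = 1 := by
    rw [← det_su11, ← su11_mul_su11_ofReal, Matrix.det_mul, det_su11, det_su11, normSq_ofReal,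
      normSq_ofReal, ← Complex.sq_norm, ← Complex.sq_norm, ← sq, ← sq, hab, hcd]
    norm_num
  exact_mod_cast hdet

lemma deriv_linearFractional (M : Matrix (Fin 2) (Fin 2) ℂ) {z : ℂ}
    (hz : M 1 0 * z + M 1 1 ≠ 0) :
    deriv (fun z => (M 0 0 * z + M 0 1) / (M 1 0 * z + M 1 1)) z
      = M.det / (M 1 0 * z + M 1 1) ^ 2 := by
  have hnum : HasDerivAt (fun w => M 0 0 * w + M 0 1) (M 0 0) z := by
    simpa using ((hasDerivAt_id z).const_mul (M 0 0)).add_const (M 0 1)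
  have hden : HasDerivAt (fun w => M 1 0 * w + M 1 1) (M 1 0) z := by
    simpa using ((hasDerivAt_id z).const_mul (M 1 0)).add_const (M 1 1)
  refine (hnum.div hden hz).deriv.trans ?_
  rw [Matrix.det_fin_two]
  ring

lemma ne_zero_of_normSq_sub_eq_one {u E : ℂ} (hdet : normSq u - normSq E = 1)
    (him : 1 < u.im) : E ≠ 0 := by
  rintro rfl
  rw [normSq_zero, sub_zero, normSq_apply] at hdet
  nlinarith

lemma su11_neg_mul_su11_denom {u E : ℂ} (hE : E ≠ 0) (hdet : normSq u - normSq E = 1)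
    (σ : ℝ) :
    (su11 u (-E) * su11 u E) 1 0 * (-E * (u.re + I * σ) / (‖E‖ : ℂ) ^ 2)
      + (su11 u (-E) * su11 u E) 1 1 = -(2 * u.im * (u.im + σ) - 1 : ℝ) := by
  have hdetC : u * conj u - E * conj E = 1 := by
    rw [mul_conj, mul_conj]; exact_mod_cast hdet
  obtain ⟨x, y, rfl⟩ : ∃ x y : ℝ, u = x + y * I := ⟨u.re, u.im, (re_add_im u).symm⟩
  rw [su11_mul, su11_apply_one_zero, su11_apply_one_one, ← conj_mul'] at *
  simp only [map_add, map_mul, map_neg, conj_conj, conj_ofReal, conj_I, add_re, add_im,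
    ofReal_re, ofReal_im, mul_re, mul_im, I_re, I_im] at *
  have hE' : conj E ≠ 0 := (map_ne_zero _).mpr hE
  have hnormE : (x : ℂ) ^ 2 + (y : ℂ) ^ 2 - conj E * E = 1 := by
    linear_combination hdetC + (y : ℂ) ^ 2 * I_sq
  field_simp
  push_cast
  linear_combination hnormE + (2 * y * σ + y ^ 2) * I_sq

lemma deriv_su11_neg_mul_su11 {u E : ℂ} (hE : E ≠ 0) (hdet : normSq u - normSq E = 1)
    {K : Matrix (Fin 2) (Fin 2) ℂ} (hK : K = su11 u (-E) * su11 u E) {σ : ℝ}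
    (hσ : 2 * u.im * (u.im + σ) - 1 ≠ 0) :
    deriv (fun z => (K 0 0 * z + K 0 1) / (K 1 0 * z + K 1 1))
        (-E * (u.re + I * σ) / (‖E‖ : ℂ) ^ 2)
      = (((2 * u.im * (u.im + σ) - 1) ^ 2)⁻¹ : ℝ) := by
  have hden := su11_neg_mul_su11_denom hE hdet σ
  have hdetK : K.det = 1 := by
    rw [hK, Matrix.det_mul, det_su11, det_su11, normSq_neg, hdet]; norm_num
  rw [← hK] at hden
  rw [deriv_linearFractional K (by rw [hden]; exact_mod_cast neg_ne_zero.2 hσ), hden, hdetK]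
  push_cast; ring

lemma two_mul_mul_sqrt_bounds {m : ℝ} (hm : 1 < m) :
    0 < 2 * m * (m - √(m ^ 2 - 1)) - 1 ∧ 2 * m * (m - √(m ^ 2 - 1)) - 1 < 1 ∧
      1 < 2 * m * (m + √(m ^ 2 - 1)) - 1 := by
  have hs : √(m ^ 2 - 1) ^ 2 = m ^ 2 - 1 := Real.sq_sqrt (by nlinarith)
  have hs0 : 0 < √(m ^ 2 - 1) := Real.sqrt_pos.mpr (by nlinarith)
  have hprod : (2 * m * (m + √(m ^ 2 - 1)) - 1) * (2 * m * (m - √(m ^ 2 - 1)) - 1) = 1 := by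
    linear_combination (-(4 * m ^ 2)) * hs
  have hplus : 1 < 2 * m * (m + √(m ^ 2 - 1)) - 1 := by nlinarith
  refine ⟨?_, ?_, hplus⟩ <;> nlinarith

theorem parallelogram_holonomy_attracting_fixed_point_general
    (a c : ℝ) (b d : ℂ)
    (hab : a ^ 2 - ‖b‖ ^ 2 = 1)
    (hcd : c ^ 2 - ‖d‖ ^ 2 = 1)
    (m : ℝ) (hm : m = Complex.im ((starRingEnd ℂ) b * d)) (hm1 : 1 < m)
    (MX MY MXinv MYinv H : Matrix (Fin 2) (Fin 2) ℂ)
    (hMX : MX = !![(a : ℂ), b; (starRingEnd ℂ) b, (a : ℂ)])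
    (hMY : MY = !![(c : ℂ), d; (starRingEnd ℂ) d, (c : ℂ)])
    (hMXinv : MXinv = !![(a : ℂ), -b; -(starRingEnd ℂ) b, (a : ℂ)])
    (hMYinv : MYinv = !![(c : ℂ), -d; -(starRingEnd ℂ) d, (c : ℂ)])
    (hH : H = MYinv * MXinv * MY * MX)
    (h : ℂ → ℂ) (hh : h = fun z => (H 0 0 * z + H 0 1) / (H 1 0 * z + H 1 1))
    (zp zm : ℂ)
    (hzp : zp = -((a : ℂ) * d + b * (c : ℂ))
        * (((a * c : ℝ) : ℂ) + (((Complex.re ((starRingEnd ℂ) b * d)) : ℝ) : ℂ)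
            + Complex.I * ((Real.sqrt (m ^ 2 - 1) : ℝ) : ℂ))
        / ((‖(a : ℂ) * d + b * (c : ℂ)‖ : ℝ) : ℂ) ^ 2)
    (hzm : zm = -((a : ℂ) * d + b * (c : ℂ))
        * (((a * c : ℝ) : ℂ) + (((Complex.re ((starRingEnd ℂ) b * d)) : ℝ) : ℂ)
            - Complex.I * ((Real.sqrt (m ^ 2 - 1) : ℝ) : ℂ))
        / ((‖(a : ℂ) * d + b * (c : ℂ)‖ : ℝ) : ℂ) ^ 2) :
    deriv h zp
      = ((((2 * m * (m + Real.sqrt (m ^ 2 - 1)) - 1) ^ 2)⁻¹ : ℝ) : ℂ) ∧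
    deriv h zm
      = ((((2 * m * (m - Real.sqrt (m ^ 2 - 1)) - 1) ^ 2)⁻¹ : ℝ) : ℂ) ∧
    0 < ((2 * m * (m + Real.sqrt (m ^ 2 - 1)) - 1) ^ 2)⁻¹ ∧
    ((2 * m * (m + Real.sqrt (m ^ 2 - 1)) - 1) ^ 2)⁻¹ < 1 ∧
    1 < ((2 * m * (m - Real.sqrt (m ^ 2 - 1)) - 1) ^ 2)⁻¹ := by
  set u : ℂ := a * c + conj b * d with hu
  set E : ℂ := a * d + b * c
  have hHuE : H = su11 u (-E) * su11 u E := by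
    rw [hH, hMX, hMY, hMXinv, hMYinv, ← map_neg, ← map_neg, su11_ofReal, su11_ofReal,
      su11_ofReal, su11_ofReal, su11_commutator_ofReal]
  have hdet : normSq u - normSq E = 1 := normSq_sub_normSq_eq_one hab hcd
  have hum : u.im = m := by simp [hu, hm]
  have hure : u.re = a * c + (conj b * d).re := by simp [hu]
  have hE : E ≠ 0 := ne_zero_of_normSq_sub_eq_one hdet (hum ▸ hm1)
  have hzp' : zp = -E * (u.re + I * √(m ^ 2 - 1)) / (‖E‖ : ℂ) ^ 2 := by
    rw [hzp, hure]; push_cast; ring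
  have hzm' : zm = -E * (u.re + I * (-√(m ^ 2 - 1) : ℝ)) / (‖E‖ : ℂ) ^ 2 := by
    rw [hzm, hure]; push_cast; ring
  obtain ⟨hminus_pos, hminus_lt_one, hone_lt_plus⟩ := two_mul_mul_sqrt_bounds hm1
  subst hh
  refine ⟨?_, ?_, by positivity, inv_lt_one_of_one_lt₀ (one_lt_pow₀ hone_lt_plus two_ne_zero),
    (one_lt_inv₀ (by positivity)).2 (pow_lt_one₀ hminus_pos.le hminus_lt_one two_ne_zero)⟩
  · rw [hzp', deriv_su11_neg_mul_su11 hE hdet hHuE (by rw [hum]; linarith), hum]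
  · rw [hzm', deriv_su11_neg_mul_su11 hE hdet hHuE (by rw [hum, ← sub_eq_add_neg]; linarith),
      hum, ← sub_eq_add_neg]

/-- Attracting and repelling fixed points of the parallelogram holonomy:
the Möbius map `h` of `H = e^{−Y}e^{−X}e^{Y}e^{X}` has derivative
`h'(z_±) = (2m(m ± √(m²−1)) − 1)^{−2}` at its fixed points, with
`0 < h'(z₊) < 1 < h'(z₋)`. -/
theorem parallelogram_holonomy_attracting_fixed_point
    (a c : ℝ) (ha : 0 < a) (hc : 0 < c) (b d : ℂ)
    (hab : a ^ 2 - ‖b‖ ^ 2 = 1)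
    (hcd : c ^ 2 - ‖d‖ ^ 2 = 1)
    (m : ℝ) (hm : m = Complex.im ((starRingEnd ℂ) b * d)) (hm1 : 1 < m)
    (MX MY MXinv MYinv H : Matrix (Fin 2) (Fin 2) ℂ)
    (hMX : MX = !![(a : ℂ), b; (starRingEnd ℂ) b, (a : ℂ)])
    (hMY : MY = !![(c : ℂ), d; (starRingEnd ℂ) d, (c : ℂ)])
    (hMXinv : MXinv = !![(a : ℂ), -b; -(starRingEnd ℂ) b, (a : ℂ)])
    (hMYinv : MYinv = !![(c : ℂ), -d; -(starRingEnd ℂ) d, (c : ℂ)])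
    (hH : H = MYinv * MXinv * MY * MX)
    (h : ℂ → ℂ) (hh : h = fun z => (H 0 0 * z + H 0 1) / (H 1 0 * z + H 1 1))
    (zp zm : ℂ)
    (hzp : zp = -((a : ℂ) * d + b * (c : ℂ))
        * (((a * c : ℝ) : ℂ) + (((Complex.re ((starRingEnd ℂ) b * d)) : ℝ) : ℂ)
            + Complex.I * ((Real.sqrt (m ^ 2 - 1) : ℝ) : ℂ))
        / ((‖(a : ℂ) * d + b * (c : ℂ)‖ : ℝ) : ℂ) ^ 2)
    (hzm : zm = -((a : ℂ) * d + b * (c : ℂ))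
        * (((a * c : ℝ) : ℂ) + (((Complex.re ((starRingEnd ℂ) b * d)) : ℝ) : ℂ)
            - Complex.I * ((Real.sqrt (m ^ 2 - 1) : ℝ) : ℂ))
        / ((‖(a : ℂ) * d + b * (c : ℂ)‖ : ℝ) : ℂ) ^ 2) :
    deriv h zp
      = ((((2 * m * (m + Real.sqrt (m ^ 2 - 1)) - 1) ^ 2)⁻¹ : ℝ) : ℂ) ∧
    deriv h zm
      = ((((2 * m * (m - Real.sqrt (m ^ 2 - 1)) - 1) ^ 2)⁻¹ : ℝ) : ℂ) ∧
    0 < ((2 * m * (m + Real.sqrt (m ^ 2 - 1)) - 1) ^ 2)⁻¹ ∧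
    ((2 * m * (m + Real.sqrt (m ^ 2 - 1)) - 1) ^ 2)⁻¹ < 1 ∧
    1 < ((2 * m * (m - Real.sqrt (m ^ 2 - 1)) - 1) ^ 2)⁻¹ :=
  parallelogram_holonomy_attracting_fixed_point_general a c b d hab hcd m hm hm1 MX MY MXinv MYinv H
    hMX hMY hMXinv hMYinv hH h hh zp zm hzp hzm
end

section
/- Let a, c be positive reals and b, d ∈ ℂ with a² − |b|² = 1, c² − |d|² = 1, and m := Im(conj(b)·d) > 1, and let z_± = −(ad + bc)·(ac + Re(conj(b)·d) ± i·√(m² − 1)) / |ad + bc|². Then Im(−z₊·conj(b)) > 0 and Im(−z₋·conj(b)) > 0. (Geometrically: the fixed directions z_± of the parallelogram holonomy lie strictly on one side of the direction of −b, i.e. the chisel edge of the planimeter lies in the interior of the angle of the parallelogram at the base vertex.) -/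
/-!
Put `u = (a d + b c) · conj b` and `λ_± = a c + Re(conj b · d) ± i √(m² - 1)`, so that
`-z_± · conj b = u λ_± / |a d + b c|²`. Since `|b|² = a² - 1`, one has `Im u = a m` and
`Re u = a R + c (a² - 1)` with `R = Re(conj b · d)`, hence `Im(u λ_±) = a m (a c + R) ± Re u · √(m² - 1)`.
Both signs are positive because the first term dominates: with `R² + m² = (a² - 1)(c² - 1)`,
`(a m (a c + R))² - (Re u)² (m² - 1) = m² c (c (2a² - 1) + 2 a R) + (Re u)²`,
and `2 a |R| < 2 a √(a² - 1) c ≤ (2a² - 1) c`.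
-/

open ComplexConjugate

section RealInequalities

variable {a c R m : ℝ}

lemma mul_add_pos_of_sq_add_sq_eq (ha : 1 ≤ a) (hc : 1 ≤ c)
    (h : R ^ 2 + m ^ 2 = (a ^ 2 - 1) * (c ^ 2 - 1)) : 0 < a * c + R := by
  have hR : R ^ 2 < (a * c) ^ 2 := by nlinarith
  linarith [(abs_lt.mp (abs_lt_of_sq_lt_sq hR (by positivity))).1]

-- `2 a √(a² - 1) ≤ 2 a² - 1` because the difference of their squares is `1`.
lemma mul_two_mul_sq_sub_one_add_pos (ha : 1 ≤ a) (hc : 1 ≤ c) (hm : 0 < m)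
    (h : R ^ 2 + m ^ 2 = (a ^ 2 - 1) * (c ^ 2 - 1)) : 0 < c * (2 * a ^ 2 - 1) + 2 * a * R := by
  have hR₀ : R ^ 2 < (a ^ 2 - 1) * c ^ 2 := by nlinarith
  have hR : (2 * a * R) ^ 2 < (c * (2 * a ^ 2 - 1)) ^ 2 := by
    nlinarith [mul_lt_mul_of_pos_left hR₀ (by positivity : (0 : ℝ) < 4 * a ^ 2)]
  linarith [(abs_lt.mp (abs_lt_of_sq_lt_sq hR (by nlinarith))).1]

lemma abs_mul_sqrt_lt (ha : 1 ≤ a) (hc : 1 ≤ c) (hm : 1 < m)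
    (h : R ^ 2 + m ^ 2 = (a ^ 2 - 1) * (c ^ 2 - 1)) :
    |(a * R + c * (a ^ 2 - 1)) * √(m ^ 2 - 1)| < a * m * (a * c + R) := by
  have hK := mul_add_pos_of_sq_add_sq_eq ha hc h
  have hP := mul_two_mul_sq_sub_one_add_pos ha hc (by linarith) h
  have hS : √(m ^ 2 - 1) ^ 2 = m ^ 2 - 1 := Real.sq_sqrt (by nlinarith)
  have hdiff : (a * m * (a * c + R)) ^ 2 - ((a * R + c * (a ^ 2 - 1)) * √(m ^ 2 - 1)) ^ 2
      = m ^ 2 * c * (c * (2 * a ^ 2 - 1) + 2 * a * R) + (a * R + c * (a ^ 2 - 1)) ^ 2 := by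
    rw [mul_pow _ (√_), hS]; ring
  refine abs_lt_of_sq_lt_sq ?_ (by positivity)
  have hm2c : 0 < m ^ 2 * c := by positivity
  nlinarith [sq_nonneg (a * R + c * (a ^ 2 - 1)), mul_pos hm2c hP]

end RealInequalities

lemma one_le_of_sq_sub_norm_sq_eq_one {a : ℝ} {b : ℂ} (ha : 0 < a) (h : a ^ 2 - ‖b‖ ^ 2 = 1) :
    1 ≤ a := by
  nlinarith [sq_nonneg ‖b‖]

lemma re_sq_add_im_sq_conj_mul (b d : ℂ) :
    (conj b * d).re ^ 2 + (conj b * d).im ^ 2 = ‖b‖ ^ 2 * ‖d‖ ^ 2 := by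
  have h := Complex.sq_norm (conj b * d)
  rw [norm_mul, Complex.norm_conj, mul_pow, Complex.normSq_apply] at h
  linarith

lemma add_mul_mul_conj (a c : ℝ) (b d : ℂ) :
    ((a : ℂ) * d + b * c) * conj b = a * (conj b * d) + ((c * ‖b‖ ^ 2 : ℝ) : ℂ) := by
  push_cast
  rw [← Complex.mul_conj']
  ring

lemma im_neg_neg_mul_div_mul_conj (w b μ : ℂ) :
    (-(-w * μ / ((‖w‖ : ℝ) : ℂ) ^ 2) * conj b).im = (w * conj b * μ).im / ‖w‖ ^ 2 := by
  rw [← Complex.div_ofReal_im]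
  push_cast
  ring_nf

lemma im_mul_add_I_mul (u : ℂ) (x y : ℝ) : (u * (x + Complex.I * y)).im = u.im * x + u.re * y := by
  simp [Complex.mul_im]
  ring

lemma im_mul_sub_I_mul (u : ℂ) (x y : ℝ) : (u * (x - Complex.I * y)).im = u.im * x - u.re * y := by
  simp [Complex.mul_im]
  ring

/-- The fixed directions `z_±` of the parallelogram holonomy lie strictly on
one side of the direction of `−b`: `Im(−z_± · conj b) > 0`. -/
theorem fixed_points_inside_angle
    (a c : ℝ) (ha : 0 < a) (hc : 0 < c) (b d : ℂ)
    (hab : a ^ 2 - ‖b‖ ^ 2 = 1)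
    (hcd : c ^ 2 - ‖d‖ ^ 2 = 1)
    (m : ℝ) (hm : m = Complex.im ((starRingEnd ℂ) b * d)) (hm1 : 1 < m)
    (zp zm : ℂ)
    (hzp : zp = -((a : ℂ) * d + b * (c : ℂ))
        * (((a * c : ℝ) : ℂ) + (((Complex.re ((starRingEnd ℂ) b * d)) : ℝ) : ℂ)
            + Complex.I * ((Real.sqrt (m ^ 2 - 1) : ℝ) : ℂ))
        / ((‖(a : ℂ) * d + b * (c : ℂ)‖ : ℝ) : ℂ) ^ 2)
    (hzm : zm = -((a : ℂ) * d + b * (c : ℂ))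
        * (((a * c : ℝ) : ℂ) + (((Complex.re ((starRingEnd ℂ) b * d)) : ℝ) : ℂ)
            - Complex.I * ((Real.sqrt (m ^ 2 - 1) : ℝ) : ℂ))
        / ((‖(a : ℂ) * d + b * (c : ℂ)‖ : ℝ) : ℂ) ^ 2) :
    0 < Complex.im (-zp * (starRingEnd ℂ) b) ∧
    0 < Complex.im (-zm * (starRingEnd ℂ) b) := by
  set w : ℂ := (a : ℂ) * d + b * c
  set R : ℝ := (conj b * d).re
  have hb : ‖b‖ ^ 2 = a ^ 2 - 1 := by linarith
  have hRm : R ^ 2 + m ^ 2 = (a ^ 2 - 1) * (c ^ 2 - 1) := by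
    rw [hm, re_sq_add_im_sq_conj_mul, hb, show ‖d‖ ^ 2 = c ^ 2 - 1 by linarith]
  have hu : w * conj b = a * (conj b * d) + ((c * (a ^ 2 - 1) : ℝ) : ℂ) := by
    rw [← hb]; exact add_mul_mul_conj a c b d
  have hu_im : (w * conj b).im = a * m := by
    rw [hu, Complex.add_im, Complex.im_ofReal_mul, Complex.ofReal_im, add_zero, hm]
  have hu_re : (w * conj b).re = a * R + c * (a ^ 2 - 1) := by
    rw [hu, Complex.add_re, Complex.re_ofReal_mul, Complex.ofReal_re]
  have hw : 0 < ‖w‖ ^ 2 := by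
    refine pow_pos (norm_pos_iff.mpr fun hw0 => ?_) 2
    have : a * m = 0 := by rw [← hu_im, hw0, zero_mul, Complex.zero_im]
    nlinarith
  obtain ⟨hlow, hup⟩ := abs_lt.mp <| abs_mul_sqrt_lt (one_le_of_sq_sub_norm_sq_eq_one ha hab)
    (one_le_of_sq_sub_norm_sq_eq_one hc hcd) hm1 hRm
  constructor
  · rw [hzp, im_neg_neg_mul_div_mul_conj, ← Complex.ofReal_add, im_mul_add_I_mul, hu_im, hu_re]
    exact div_pos (by linarith) hw
  · rw [hzm, im_neg_neg_mul_div_mul_conj, ← Complex.ofReal_add, im_mul_sub_I_mul, hu_im, hu_re]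
    exact div_pos (by linarith) hw
end
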